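/- Consider any play of the nonrepetitive game over a set S with at least 3 elements in which, whenever it is Ann's turn (move number m odd, current sequence s_1,…,s_{m−1}), her chosen symbol s_m satisfies: (i) s_m ≠ s_{m−2} whenever m ≥ 3; (ii) if m ≥ 5 and s_{m−1} = s_{m−4}, then s_m ≠ s_{m−3}; (iii) if m ≥ 5 and rules (i) and (ii) together exclude at most one symbol, then s_m ≠ s_{m−4}. Then, no matter how Ben plays, the sequence produced in the play contains no repetition of size 2, no repetition of size 3, and no repetition of size 4. -/
import Mathlib


/-- Consider any play `s : ℕ → S` of the nonrepetitive game over a set `S` with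
at least 3 elements, where `s i` is the symbol appended at the `(i+1)`-st move
(so Ann plays the terms with even index `i`, Ben plays the terms with odd
index, and nothing is ever erased).  Suppose that at each of her moves from the
third one on, Ann obeys the rules:
(i) her symbol differs from the symbol two positions back;
(ii) if the previous symbol equals the symbol four positions back, then her
symbol differs from the symbol three positions back;
(iii) if rules (i) and (ii) together exclude at most one symbol, then her
symbol differs from the symbol four positions back.
Then, no matter how Ben plays, the produced sequence contains no repetition of
size 2, 3 or 4. -/
theorem nonrepetitive_game_strategy_avoids_234 {S : Type*} [Fintype S]
    (hS : 3 ≤ Fintype.card S) (s : ℕ → S)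
    (h1 : ∀ j, j % 2 = 0 → s (j + 2) ≠ s j)
    (h2 : ∀ j, j % 2 = 0 → s (j + 3) = s j → s (j + 4) ≠ s (j + 1))
    (h3 : ∀ j, j % 2 = 0 → (s (j + 3) ≠ s j ∨ s (j + 1) = s (j + 2)) →
      s (j + 4) ≠ s j) :
    ∀ h, h = 2 ∨ h = 3 ∨ h = 4 → ∀ i, ¬ (∀ j < h, s (i + j) = s (i + h + j)) := by
  intro h hh i hrep
  have hpar : i % 2 = 0 ∨ (i + 1) % 2 = 0 := by omega
  rcases hh with rfl | rfl | rfl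
  · -- h = 2
    have e0 : s i = s (i + 2) := by simpa using hrep 0 (by norm_num)
    have e1 : s (i + 1) = s (i + 3) := by
      simpa [show i + 2 + 1 = i + 3 from by omega] using hrep 1 (by norm_num)
    rcases hpar with hi | hi
    · exact h1 i hi e0.symm
    · have := h1 (i + 1) hi
      rw [show i + 1 + 2 = i + 3 from by omega] at this
      exact this e1.symm
  · -- h = 3
    have e0 : s i = s (i + 3) := by simpa using hrep 0 (by norm_num)
    have e1 : s (i + 1) = s (i + 4) := by
      simpa [show i + 3 + 1 = i + 4 from by omega] using hrep 1 (by norm_num)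
    have e2 : s (i + 2) = s (i + 5) := by
      simpa [show i + 3 + 2 = i + 5 from by omega] using hrep 2 (by norm_num)
    rcases hpar with hi | hi
    · exact h2 i hi e0.symm e1.symm
    · have := h2 (i + 1) hi
      rw [show i + 1 + 3 = i + 4 from by omega,
        show i + 1 + 4 = i + 5 from by omega,
        show i + 1 + 1 = i + 2 from by omega] at this
      exact this e1.symm e2.symm
  · -- h = 4
    have e0 : s i = s (i + 4) := by simpa using hrep 0 (by norm_num)
    have e1 : s (i + 1) = s (i + 5) := by
      simpa [show i + 4 + 1 = i + 5 from by omega] using hrep 1 (by norm_num)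
    have e2 : s (i + 2) = s (i + 6) := by
      simpa [show i + 4 + 2 = i + 6 from by omega] using hrep 2 (by norm_num)
    have e3 : s (i + 3) = s (i + 7) := by
      simpa [show i + 4 + 3 = i + 7 from by omega] using hrep 3 (by norm_num)
    rcases hpar with hi | hi
    · by_cases hc : s (i + 3) = s i
      · -- then s (i+3) = s (i+4); use rule (iii) at i+2
        have hc' : s (i + 3) = s (i + 4) := hc.trans e0
        have := h3 (i + 2) (by omega) (Or.inr (by
          rw [show i + 2 + 1 = i + 3 from by omega,
            show i + 2 + 2 = i + 4 from by omega]; exact hc'))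
        rw [show i + 2 + 4 = i + 6 from by omega] at this
        exact this e2.symm
      · exact h3 i hi (Or.inl hc) e0.symm
    · by_cases hc : s (i + 4) = s (i + 1)
      · -- s((i+1)+3) = s((i+1)+4); use rule (iii) at i+3
        have hc' : s (i + 4) = s (i + 5) := hc.trans e1
        have := h3 (i + 3) (by omega) (Or.inr (by
          rw [show i + 3 + 1 = i + 4 from by omega,
            show i + 3 + 2 = i + 5 from by omega]; exact hc'))
        rw [show i + 3 + 4 = i + 7 from by omega] at this
        exact this e3.symm
      · have := h3 (i + 1) hi (Or.inl (by
          rw [show i + 1 + 3 = i + 4 from by omega]; exact hc))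
        rw [show i + 1 + 4 = i + 5 from by omega] at this
        exact this e1.symm
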